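/- Let (A, ∧, ∼, ∽, 1) be a pseudo equality algebra, σ: A → A an internal state of type I or of type II on A, and x, y ∈ A with y ≤ x. Then: (1) σ(y ∼ x) ≤ σ(y) ∼ σ(x) and σ(x ∽ y) ≤ σ(x) ∽ σ(y); (2) σ(y) ∼ σ(x) = σ(x) → σ(y) and σ(x) ∽ σ(y) = σ(x) ⇝ σ(y); (3) for all u, v ∈ A (no order assumption), σ(u → v) ≤ σ(u) → σ(v) and σ(u ⇝ v) ≤ σ(u) ⇝ σ(v), where u → v = (u∧v) ∼ u and u ⇝ v = u ∽ (u∧v). -/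

import Mathlib

/-- A pseudo equality algebra (JK-algebra): a meet-semilattice with top element `⊤`
(playing the role of `1`) equipped with two equality operations `sim` (`∼`) and
`bsim` (`∽`) satisfying axioms (A2)–(A7). -/
class PseudoEqualityAlgebra (A : Type*) extends SemilatticeInf A, OrderTop A where
  sim : A → A → A
  bsim : A → A → A
  sim_self : ∀ x : A, sim x x = ⊤
  bsim_self : ∀ x : A, bsim x x = ⊤
  sim_top : ∀ x : A, sim x ⊤ = x
  top_bsim : ∀ x : A, bsim ⊤ x = x
  A4a : ∀ x y z : A, x ≤ y → y ≤ z → sim x z ≤ sim y z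
  A4b : ∀ x y z : A, x ≤ y → y ≤ z → sim x z ≤ sim x y
  A4c : ∀ x y z : A, x ≤ y → y ≤ z → bsim z x ≤ bsim z y
  A4d : ∀ x y z : A, x ≤ y → y ≤ z → bsim z x ≤ bsim y x
  A5a : ∀ x y z : A, sim x y ≤ sim (x ⊓ z) (y ⊓ z)
  A5b : ∀ x y z : A, bsim x y ≤ bsim (x ⊓ z) (y ⊓ z)
  A6a : ∀ x y z : A, sim x y ≤ bsim (sim z x) (sim z y)
  A6b : ∀ x y z : A, bsim x y ≤ sim (bsim x z) (bsim y z)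
  A7a : ∀ x y z : A, sim x y ≤ sim (sim x z) (sim y z)
  A7b : ∀ x y z : A, bsim x y ≤ bsim (bsim z x) (bsim z y)

open PseudoEqualityAlgebra

/-- An internal state of type I on a pseudo equality algebra:
axioms (IS1), (IS2), (IS3), (IS4). -/
def IsInternalStateI {A : Type*} [PseudoEqualityAlgebra A] (σ : A → A) : Prop :=
  (∀ x y : A, x ≤ y → σ x ≤ σ y) ∧
  (∀ x y : A,
    σ (sim (x ⊓ y) x) = sim (σ y) (σ (bsim (sim (x ⊓ y) x) y)) ∧
    σ (bsim x (x ⊓ y)) = bsim (σ (sim y (bsim x (x ⊓ y)))) (σ y)) ∧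
  (∀ x y : A,
    σ (sim (σ x) (σ y)) = sim (σ x) (σ y) ∧
    σ (bsim (σ x) (σ y)) = bsim (σ x) (σ y)) ∧
  (∀ x y : A, σ (σ x ⊓ σ y) = σ x ⊓ σ y)

/-- An internal state of type II on a pseudo equality algebra:
axioms (IS1), (IS2'), (IS3), (IS4). -/
def IsInternalStateII {A : Type*} [PseudoEqualityAlgebra A] (σ : A → A) : Prop :=
  (∀ x y : A, x ≤ y → σ x ≤ σ y) ∧
  (∀ x y : A,
    σ (sim (x ⊓ y) x) = sim (σ y) (σ (bsim (sim (x ⊓ y) y) x)) ∧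
    σ (bsim x (x ⊓ y)) = bsim (σ (sim x (bsim y (x ⊓ y)))) (σ y)) ∧
  (∀ x y : A,
    σ (sim (σ x) (σ y)) = sim (σ x) (σ y) ∧
    σ (bsim (σ x) (σ y)) = bsim (σ x) (σ y)) ∧
  (∀ x y : A, σ (σ x ⊓ σ y) = σ x ⊓ σ y)

/-! For `b ≤ a` the meet `a ⊓ b` in (IS2)/(IS2') collapses to `b`. Under (IS2') the inner
argument then collapses as well (`b ∼ b = 1`), giving `σ (b ∼ a) = σ b ∼ σ a` outright. Under
(IS2) it does not, but `a ≤ (b ∼ a) ∽ b` by (A6) with `⊤`, so monotonicity of `σ` and the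
antitonicity (A4) of `∼` in its second argument give the inequality. Part (3) is part (1) for
`u ⊓ v ≤ u`, followed by `σ (u ⊓ v) ≤ σ u ⊓ σ v` and (A4) again. -/

namespace PseudoEqualityAlgebra

variable {A : Type*} [PseudoEqualityAlgebra A]

theorem le_bsim_sim (a b : A) : a ≤ bsim (sim b a) b := by
  simpa only [sim_top] using A6a a ⊤ b

theorem le_sim_bsim (a b : A) : a ≤ sim b (bsim a b) := by
  simpa only [top_bsim] using A6b ⊤ a b

theorem map_imp_le_of_map_sim_le {σ : A → A} (hmono : Monotone σ)
    (hsim : ∀ a b : A, b ≤ a → σ (sim b a) ≤ sim (σ b) (σ a)) (u v : A) :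
    σ (sim (u ⊓ v) u) ≤ sim (σ u ⊓ σ v) (σ u) :=
  (hsim u (u ⊓ v) inf_le_left).trans <|
    A4a _ _ _ (le_inf (hmono inf_le_left) (hmono inf_le_right)) inf_le_left

theorem map_bimp_le_of_map_bsim_le {σ : A → A} (hmono : Monotone σ)
    (hbsim : ∀ a b : A, b ≤ a → σ (bsim a b) ≤ bsim (σ a) (σ b)) (u v : A) :
    σ (bsim u (u ⊓ v)) ≤ bsim (σ u) (σ u ⊓ σ v) :=
  (hbsim u (u ⊓ v) inf_le_left).trans <|
    A4c _ _ _ (le_inf (hmono inf_le_left) (hmono inf_le_right)) inf_le_left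

end PseudoEqualityAlgebra

namespace IsInternalStateI

variable {A : Type*} [PseudoEqualityAlgebra A] {σ : A → A}

theorem monotone (hσ : IsInternalStateI σ) : Monotone σ :=
  fun _ _ h => hσ.1 _ _ h

theorem map_sim_le_of_le (hσ : IsInternalStateI σ) {a b : A} (hba : b ≤ a) :
    σ (sim b a) ≤ sim (σ b) (σ a) := by
  have h := (hσ.2.1 a b).1
  rw [inf_eq_right.mpr hba] at h
  rw [h]
  exact A4b _ _ _ (hσ.monotone hba) (hσ.monotone (le_bsim_sim a b))

theorem map_bsim_le_of_le (hσ : IsInternalStateI σ) {a b : A} (hba : b ≤ a) :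
    σ (bsim a b) ≤ bsim (σ a) (σ b) := by
  have h := (hσ.2.1 a b).2
  rw [inf_eq_right.mpr hba] at h
  rw [h]
  exact A4d _ _ _ (hσ.monotone hba) (hσ.monotone (le_sim_bsim a b))

end IsInternalStateI

namespace IsInternalStateII

variable {A : Type*} [PseudoEqualityAlgebra A] {σ : A → A}

theorem monotone (hσ : IsInternalStateII σ) : Monotone σ :=
  fun _ _ h => hσ.1 _ _ h

theorem map_sim_of_le (hσ : IsInternalStateII σ) {a b : A} (hba : b ≤ a) :
    σ (sim b a) = sim (σ b) (σ a) := by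
  simpa only [inf_eq_right.mpr hba, sim_self, top_bsim] using (hσ.2.1 a b).1

theorem map_bsim_of_le (hσ : IsInternalStateII σ) {a b : A} (hba : b ≤ a) :
    σ (bsim a b) = bsim (σ a) (σ b) := by
  simpa only [inf_eq_right.mpr hba, bsim_self, sim_top] using (hσ.2.1 a b).2

end IsInternalStateII

/-- Proposition 6.7: let `σ` be an internal state of type I or type II on a pseudo equality
algebra `A` and `y ≤ x`. Then
(1) `σ(y ∼ x) ≤ σ(y) ∼ σ(x)` and `σ(x ∽ y) ≤ σ(x) ∽ σ(y)`;
(2) `σ(y) ∼ σ(x) = σ(x) → σ(y)` and `σ(x) ∽ σ(y) = σ(x) ⇝ σ(y)`;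
(3) for all `u, v`, `σ(u → v) ≤ σ(u) → σ(v)` and `σ(u ⇝ v) ≤ σ(u) ⇝ σ(v)`,
where `u → v = (u∧v) ∼ u` and `u ⇝ v = u ∽ (u∧v)`. -/
theorem stmt14 {A : Type*} [PseudoEqualityAlgebra A] (σ : A → A)
    (hσ : IsInternalStateI σ ∨ IsInternalStateII σ)
    (x y : A) (hyx : y ≤ x) :
    (σ (sim y x) ≤ sim (σ y) (σ x) ∧ σ (bsim x y) ≤ bsim (σ x) (σ y)) ∧
    (sim (σ y) (σ x) = sim (σ x ⊓ σ y) (σ x) ∧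
     bsim (σ x) (σ y) = bsim (σ x) (σ x ⊓ σ y)) ∧
    (∀ u v : A,
      σ (sim (u ⊓ v) u) ≤ sim (σ u ⊓ σ v) (σ u) ∧
      σ (bsim u (u ⊓ v)) ≤ bsim (σ u) (σ u ⊓ σ v)) := by
  have hmono : Monotone σ := hσ.elim IsInternalStateI.monotone IsInternalStateII.monotone
  have hmap : ∀ a b : A, b ≤ a →
      σ (sim b a) ≤ sim (σ b) (σ a) ∧ σ (bsim a b) ≤ bsim (σ a) (σ b) := by
    intro a b hba
    rcases hσ with hI | hII
    · exact ⟨hI.map_sim_le_of_le hba, hI.map_bsim_le_of_le hba⟩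
    · exact ⟨(hII.map_sim_of_le hba).le, (hII.map_bsim_of_le hba).le⟩
  have hinf : σ x ⊓ σ y = σ y := inf_eq_right.mpr (hmono hyx)
  refine ⟨hmap x y hyx, ⟨by rw [hinf], by rw [hinf]⟩, fun u v => ⟨?_, ?_⟩⟩
  · exact map_imp_le_of_map_sim_le hmono (fun a b h => (hmap a b h).1) u v
  · exact map_bimp_le_of_map_bsim_le hmono (fun a b h => (hmap a b h).2) u v
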